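/- (Kasteleyn's theorem in positivity form, Theorem 2.4.) Let n ≥ 1, let G be a finite simple graph on the vertex set {1,…,2n}, equipped with a direction of each edge (for each edge {i,j}, exactly one of i ≻ j or j ≻ i holds) and with edge weights d_e in a commutative ℚ-algebra R. Define the antisymmetric 2n×2n matrix a by a_{i,j} := +d_{i,j} if {i,j} is an edge of G and i ≻ j; a_{i,j} := −d_{i,j} if {i,j} is an edge of G and i ≺ j; and a_{i,j} := 0 if {i,j} is not an edge of G. Call a perfect matching σ of G, written as pairs (v_1,v_2),…,(v_{2n−1},v_{2n}) with v_{2k−1} ≻ v_{2k}, positive if the permutation k ↦ v_k of {1,…,2n} has signature +1 (this is independent of the ordering of the pairs). If every perfect matching of G is positive (or G has no perfect matching), then pf(a) = Σ_{σ} ∏_{e ∈ σ} d_e, the sum running over all perfect matchings σ of G; i.e., the Pfaffian of a equals the pure dimer partition function of G. -/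

import Mathlib

open Matrix

/-- The Pfaffian of an `N × N` matrix (intended for antisymmetric matrices of even size `N`),
defined by `pf A = (1/(2^(N/2) (N/2)!)) ∑_{π ∈ S_N} sgn(π) ∏_k A_{π(2k-1), π(2k)}`.
For `N = 0` this gives `1` (the empty-matrix convention). -/
noncomputable def pf {R : Type*} [CommRing R] [Algebra ℚ R] {N : ℕ}
    (A : Matrix (Fin N) (Fin N) R) : R :=
  algebraMap ℚ R (1 / (2 ^ (N / 2) * Nat.factorial (N / 2))) *
    ∑ π : Equiv.Perm (Fin N), (Equiv.Perm.sign π : ℤ) •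
      ∏ k : Fin (N / 2),
        A (π ⟨2 * k.val, by have := k.isLt; omega⟩)
          (π ⟨2 * k.val + 1, by have := k.isLt; omega⟩)


/-- The index `2k` (0-based) in `Fin (2*n)`, i.e. the position `2k-1` in 1-based notation. -/
def lo {n : ℕ} (k : Fin n) : Fin (2 * n) := ⟨2 * k.val, by have := k.isLt; omega⟩

/-- The index `2k+1` (0-based) in `Fin (2*n)`, i.e. the position `2k` in 1-based notation. -/
def hi {n : ℕ} (k : Fin n) : Fin (2 * n) := ⟨2 * k.val + 1, by have := k.isLt; omega⟩
/-!
Expand `pf a` as a sum over enumerations `π` of `{0, …, 2n-1}` into consecutive pairs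
`(π (2k), π (2k+1))`. The enumeration `π` lists the pairs of the perfect matching
`π * stdMatching * π⁻¹`, and its term `sgn π • ∏ₖ a (π (2k)) (π (2k+1))` vanishes unless that
matching uses edges of `G` only. For a matching of `G`, reversing one pair changes both the sign
and one entry of `a`, so the term is unchanged; reversing every misoriented pair yields an
oriented enumeration, whose sign is `+1` by hypothesis, and the term equals the weight of the
matching. The enumerations of a fixed matching form a coset of the centralizer of
`stdMatching`, which has `2ⁿ n!` elements, and this cancels the normalisation of `pf`.
-/
open Finset Equiv
open scoped Nat

theorem Equiv.Perm.cycleType_eq_replicate_two {α : Type*} [Fintype α] [DecidableEq α]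
    {f : Perm α} (hfix : ∀ x, f x ≠ x) (hinv : ∀ x, f (f x) = x) :
    f.cycleType = Multiset.replicate (Fintype.card α / 2) 2 := by
  have hsq : f ^ 2 = 1 := Equiv.ext fun x => by simp [sq, hinv]
  have hsupp : f.support = univ := eq_univ_of_forall fun x => mem_support.mpr (hfix x)
  have hcard := f.sum_cycleType
  rw [cycleType_of_pow_prime_eq_one hsq, Multiset.sum_replicate, hsupp, card_univ,
    smul_eq_mul] at hcard
  rw [cycleType_of_pow_prime_eq_one hsq, ← hcard, Nat.mul_div_cancel _ two_pos]

theorem card_conj_eq_card_centralizer {G : Type*} [Group G] [Fintype G] [DecidableEq G]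
    {g h : G} (hgh : IsConj g h) :
    #{c | c * g * c⁻¹ = h} = Nat.card (Subgroup.centralizer {g}) := by
  obtain ⟨c₀, rfl⟩ := isConj_iff.mp hgh
  rw [← Nat.card_eq_finsetCard]
  refine (Nat.card_congr (Equiv.subtypeEquiv (Equiv.mulLeft c₀) fun k => ?_)).symm
  have hconj : c₀ * k * g * (c₀ * k)⁻¹ = c₀ * (k * g * k⁻¹) * c₀⁻¹ := by group
  simp only [Subgroup.mem_centralizer_singleton_iff, Equiv.coe_mulLeft, Finset.mem_filter,
    Finset.mem_univ, true_and]
  rw [hconj, mul_left_inj, mul_right_inj, mul_inv_eq_iff_eq_mul]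

variable {n : ℕ}

@[simp] lemma val_lo (k : Fin n) : (lo k : ℕ) = 2 * k := rfl

@[simp] lemma val_hi (k : Fin n) : (hi k : ℕ) = 2 * k + 1 := rfl

lemma lo_injective : Function.Injective (lo (n := n)) := fun k k' h => by
  have := congrArg Fin.val h; simp only [val_lo] at this; omega

lemma hi_injective : Function.Injective (hi (n := n)) := fun k k' h => by
  have := congrArg Fin.val h; simp only [val_hi] at this; omega

lemma lo_ne_hi (k k' : Fin n) : lo k ≠ hi k' := fun h => by
  have := congrArg Fin.val h; simp only [val_lo, val_hi] at this; omega

def pairIdx (x : Fin (2 * n)) : Fin n := ⟨x / 2, by omega⟩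

@[simp] lemma pairIdx_lo (k : Fin n) : pairIdx (lo k) = k := by ext; simp [pairIdx]

@[simp] lemma pairIdx_hi (k : Fin n) : pairIdx (hi k) = k := by ext; simp [pairIdx]; omega

lemma eq_lo_or_eq_hi (x : Fin (2 * n)) : x = lo (pairIdx x) ∨ x = hi (pairIdx x) := by
  simp only [Fin.ext_iff, val_lo, val_hi, pairIdx]; omega

def partner (x : Fin (2 * n)) : Fin (2 * n) :=
  if (x : ℕ) % 2 = 0 then hi (pairIdx x) else lo (pairIdx x)

@[simp] lemma partner_lo (k : Fin n) : partner (lo k) = hi k := by simp [partner]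

@[simp] lemma partner_hi (k : Fin n) : partner (hi k) = lo k := by simp [partner]

lemma partner_involutive : Function.Involutive (partner (n := n)) := fun x => by
  rcases eq_lo_or_eq_hi x with hx | hx <;> rw [hx] <;> simp

def stdMatching : Perm (Fin (2 * n)) := partner_involutive.toPerm

@[simp] lemma stdMatching_lo (k : Fin n) : stdMatching (lo k) = hi k := partner_lo k

@[simp] lemma stdMatching_hi (k : Fin n) : stdMatching (hi k) = lo k := partner_hi k

lemma stdMatching_ne (x : Fin (2 * n)) : stdMatching x ≠ x := by
  rcases eq_lo_or_eq_hi x with hx | hx <;> rw [hx]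
  · simpa using (lo_ne_hi _ _).symm
  · simpa using lo_ne_hi _ _

lemma stdMatching_stdMatching (x : Fin (2 * n)) : stdMatching (stdMatching x) = x :=
  partner_involutive x

lemma cycleType_stdMatching : (stdMatching (n := n)).cycleType = Multiset.replicate n 2 := by
  rw [Perm.cycleType_eq_replicate_two stdMatching_ne stdMatching_stdMatching,
    Fintype.card_fin, Nat.mul_div_cancel_left n two_pos]

lemma card_centralizer_stdMatching :
    Nat.card (Subgroup.centralizer {stdMatching (n := n)}) = 2 ^ n * n ! := by
  rw [Perm.nat_card_centralizer, cycleType_stdMatching, Multiset.sum_replicate,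
    Multiset.prod_replicate, Fintype.card_fin, smul_eq_mul, mul_comm n 2, Nat.sub_self,
    Nat.factorial_zero, one_mul]
  rcases n.eq_zero_or_pos with rfl | hn
  · simp
  · rw [Multiset.toFinset_replicate, if_neg hn.ne', Finset.prod_singleton,
      Multiset.count_replicate_self]

lemma card_conj_stdMatching {f : Perm (Fin (2 * n))} (hfix : ∀ x, f x ≠ x)
    (hinv : ∀ x, f (f x) = x) : #{π | π * stdMatching * π⁻¹ = f} = 2 ^ n * n ! := by
  have hconj : IsConj stdMatching f := by
    rw [Perm.isConj_iff_cycleType_eq, cycleType_stdMatching,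
      Perm.cycleType_eq_replicate_two hfix hinv, Fintype.card_fin,
      Nat.mul_div_cancel_left n two_pos]
  rw [card_conj_eq_card_centralizer hconj, card_centralizer_stdMatching]

section PairProd

variable {R : Type*}

def pairProd [CommMonoid R] (w : Fin (2 * n) → Fin (2 * n) → R) (π : Perm (Fin (2 * n))) : R :=
  ∏ k : Fin n, w (π (lo k)) (π (hi k))

lemma mul_swap_apply_lo (π : Perm (Fin (2 * n))) (j k : Fin n) :
    (π * swap (lo j) (hi j)) (lo k) = if k = j then π (hi k) else π (lo k) := by
  split_ifs with hk
  · simp [hk]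
  · simp [swap_apply_of_ne_of_ne (lo_injective.ne hk) (lo_ne_hi k j)]

lemma mul_swap_apply_hi (π : Perm (Fin (2 * n))) (j k : Fin n) :
    (π * swap (lo j) (hi j)) (hi k) = if k = j then π (lo k) else π (hi k) := by
  split_ifs with hk
  · simp [hk]
  · simp [swap_apply_of_ne_of_ne (lo_ne_hi j k).symm (hi_injective.ne hk)]

lemma pairProd_mul_swap [CommMonoid R] (w : Fin (2 * n) → Fin (2 * n) → R)
    (π : Perm (Fin (2 * n))) (j : Fin n) :
    pairProd w (π * swap (lo j) (hi j)) =
      w (π (hi j)) (π (lo j)) * ∏ k ∈ univ.erase j, w (π (lo k)) (π (hi k)) := by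
  rw [pairProd, ← mul_prod_erase _ _ (mem_univ j), mul_swap_apply_lo, mul_swap_apply_hi,
    if_pos rfl, if_pos rfl]
  congr 1
  refine prod_congr rfl fun k hk => ?_
  rw [mul_swap_apply_lo, mul_swap_apply_hi, if_neg (ne_of_mem_erase hk),
    if_neg (ne_of_mem_erase hk)]

lemma pairProd_mul_swap_of_symm [CommMonoid R] {w : Fin (2 * n) → Fin (2 * n) → R}
    (hw : ∀ i j, w i j = w j i) (π : Perm (Fin (2 * n))) (j : Fin n) :
    pairProd w (π * swap (lo j) (hi j)) = pairProd w π := by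
  rw [pairProd_mul_swap, hw, mul_prod_erase univ (fun k => w (π (lo k)) (π (hi k))) (mem_univ j),
    pairProd]

lemma sign_smul_pairProd_mul_swap [CommRing R] {w : Fin (2 * n) → Fin (2 * n) → R}
    (hw : ∀ i j, w j i = -w i j) (π : Perm (Fin (2 * n))) (j : Fin n) :
    (Perm.sign (π * swap (lo j) (hi j)) : ℤ) • pairProd w (π * swap (lo j) (hi j)) =
      (Perm.sign π : ℤ) • pairProd w π := by
  rw [pairProd_mul_swap, hw, neg_mul,
    mul_prod_erase univ (fun k => w (π (lo k)) (π (hi k))) (mem_univ j), Perm.sign_mul,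
    Perm.sign_swap (lo_ne_hi j j)]
  simp [pairProd]

end PairProd

section Enumeration

variable {π f : Perm (Fin (2 * n))}

lemma isPerfectMatching_iff_adj_pairs {G : SimpleGraph (Fin (2 * n))}
    (hf : ∀ x, f (π x) = π (stdMatching x)) :
    (∀ i, f i ≠ i ∧ f (f i) = i ∧ G.Adj i (f i)) ↔ ∀ k, G.Adj (π (lo k)) (π (hi k)) := by
  constructor
  · intro h k
    simpa [hf] using (h (π (lo k))).2.2
  · intro h i
    obtain ⟨x, rfl⟩ := π.surjective i
    refine ⟨by simpa [hf] using stdMatching_ne x, by simp [hf, stdMatching_stdMatching], ?_⟩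
    rcases eq_lo_or_eq_hi x with hx | hx <;> rw [hx, hf]
    · simpa using h _
    · simpa using (h _).symm

lemma prod_filter_lt_eq_pairProd {R : Type*} [CommMonoid R] {d : Fin (2 * n) → Fin (2 * n) → R}
    (hd : ∀ i j, d i j = d j i) (hf : ∀ x, f (π x) = π (stdMatching x)) :
    ∏ i ∈ univ.filter (fun i => i < f i), d i (f i) = pairProd d π := by
  have hf_lo (k : Fin n) : f (π (lo k)) = π (hi k) := by simp [hf]
  have hf_hi (k : Fin n) : f (π (hi k)) = π (lo k) := by simp [hf]
  have hmin (k : Fin n) : min (π (lo k)) (π (hi k)) < f (min (π (lo k)) (π (hi k))) ∧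
      d (min (π (lo k)) (π (hi k))) (f (min (π (lo k)) (π (hi k)))) = d (π (lo k)) (π (hi k)) ∧
      pairIdx (π⁻¹ (min (π (lo k)) (π (hi k)))) = k := by
    rcases lt_or_gt_of_ne (π.injective.ne (lo_ne_hi k k)) with h | h
    · simp [min_eq_left h.le, hf_lo, h]
    · simp [min_eq_right h.le, hf_hi, h, hd]
  -- the pair `{π (lo k), π (hi k)}` is indexed by its smaller vertex
  symm
  refine prod_nbij' (fun k => min (π (lo k)) (π (hi k))) (fun i => pairIdx (π⁻¹ i))
    (fun k _ => by simpa using (hmin k).1) (fun _ _ => mem_univ _) (fun k _ => (hmin k).2.2)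
    (fun i hmem => ?_) (fun k _ => (hmin k).2.1.symm)
  have hlt : i < f i := (mem_filter.mp hmem).2
  rcases eq_lo_or_eq_hi (π⁻¹ i) with hx | hx
  · have hπx : π (lo (pairIdx (π⁻¹ i))) = i := by rw [← hx]; simp
    simp only [← hf_lo, hπx, min_eq_left hlt.le]
  · have hπx : π (hi (pairIdx (π⁻¹ i))) = i := by rw [← hx]; simp
    simp only [← hf_hi, hπx, min_eq_right hlt.le]

end Enumeration

lemma pf_eq_sum_pairProd {R : Type*} [CommRing R] [Algebra ℚ R]
    (A : Matrix (Fin (2 * n)) (Fin (2 * n)) R) :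
    pf A = algebraMap ℚ R (1 / (2 ^ n * n !)) *
      ∑ π : Perm (Fin (2 * n)), (Perm.sign π : ℤ) • pairProd A π := by
  have hhalf : 2 * n / 2 = n := by omega
  rw [pf]
  congr 1
  · rw [hhalf]
  · exact sum_congr rfl fun π _ =>
      congrArg _ (Fintype.prod_equiv (finCongr hhalf) _ _ fun k => rfl)

section Kasteleyn

variable {R : Type*} [CommRing R] {G : SimpleGraph (Fin (2 * n))} [DecidableRel G.Adj]
  {dir : Fin (2 * n) → Fin (2 * n) → Bool} {d : Fin (2 * n) → Fin (2 * n) → R}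
  {a : Matrix (Fin (2 * n)) (Fin (2 * n)) R}

lemma signedAdj_antisymm (hdir : ∀ i j, G.Adj i j → dir i j = !dir j i)
    (hd : ∀ i j, d i j = d j i)
    (ha : ∀ i j, a i j = if G.Adj i j then (if dir i j then d i j else -(d i j)) else 0)
    (i j : Fin (2 * n)) : a j i = -a i j := by
  rw [ha, ha]
  by_cases hij : G.Adj i j
  · rw [if_pos hij.symm, if_pos hij, hdir j i hij.symm, hd j i]
    cases dir i j <;> simp
  · rw [if_neg (fun h => hij h.symm), if_neg hij, neg_zero]

lemma pairProd_eq_zero_of_not_adj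
    (ha : ∀ i j, a i j = if G.Adj i j then (if dir i j then d i j else -(d i j)) else 0)
    {π : Perm (Fin (2 * n))} (hπ : ¬ ∀ k, G.Adj (π (lo k)) (π (hi k))) : pairProd a π = 0 := by
  obtain ⟨k, hk⟩ := not_forall.mp hπ
  exact prod_eq_zero (mem_univ k) (by rw [ha, if_neg hk])

lemma sign_smul_pairProd_eq_pairProd_of_adj (hdir : ∀ i j, G.Adj i j → dir i j = !dir j i)
    (hd : ∀ i j, d i j = d j i)
    (ha : ∀ i j, a i j = if G.Adj i j then (if dir i j then d i j else -(d i j)) else 0)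
    (hpos : ∀ π : Perm (Fin (2 * n)),
      (∀ k : Fin n, G.Adj (π (lo k)) (π (hi k)) ∧ dir (π (lo k)) (π (hi k)) = true) →
      Perm.sign π = 1)
    {π : Perm (Fin (2 * n))} (hπ : ∀ k, G.Adj (π (lo k)) (π (hi k))) :
    (Perm.sign π : ℤ) • pairProd a π = pairProd d π := by
  suffices key : ∀ S : Finset (Fin n), ∀ π : Perm (Fin (2 * n)),
      (∀ k, G.Adj (π (lo k)) (π (hi k))) → (∀ k ∉ S, dir (π (lo k)) (π (hi k)) = true) →
      (Perm.sign π : ℤ) • pairProd a π = pairProd d π from key univ π hπ (by simp)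
  intro S
  induction S using Finset.induction_on with
  | empty =>
    intro π hπ horient
    have horient' (k : Fin n) : dir (π (lo k)) (π (hi k)) = true := horient k (notMem_empty k)
    rw [hpos π fun k => ⟨hπ k, horient' k⟩, Units.val_one, one_smul]
    exact prod_congr rfl fun k _ => by rw [ha, if_pos (hπ k), if_pos (horient' k)]
  | insert j S _ ih =>
    intro π hπ horient
    by_cases hj : dir (π (lo j)) (π (hi j)) = true
    · refine ih π hπ fun k hk => ?_
      by_cases hkj : k = j
      · exact hkj ▸ hj
      · exact horient k (by simp [hkj, hk])
    -- reverse the misoriented pair `j`: by (anti)symmetry neither side changes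
    rw [← sign_smul_pairProd_mul_swap (signedAdj_antisymm hdir hd ha) π j,
      ← pairProd_mul_swap_of_symm hd π j]
    refine ih _ (fun k => ?_) (fun k hk => ?_) <;>
      rw [mul_swap_apply_lo, mul_swap_apply_hi] <;> split_ifs with hkj
    · exact (hπ k).symm
    · exact hπ k
    · subst hkj
      simpa [hdir _ _ (hπ k).symm] using hj
    · exact horient k (by simp [hkj, hk])

lemma sum_sign_smul_pairProd_eq (hdir : ∀ i j, G.Adj i j → dir i j = !dir j i)
    (hd : ∀ i j, d i j = d j i)
    (ha : ∀ i j, a i j = if G.Adj i j then (if dir i j then d i j else -(d i j)) else 0)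
    (hpos : ∀ π : Perm (Fin (2 * n)),
      (∀ k : Fin n, G.Adj (π (lo k)) (π (hi k)) ∧ dir (π (lo k)) (π (hi k)) = true) →
      Perm.sign π = 1) :
    ∑ π : Perm (Fin (2 * n)), (Perm.sign π : ℤ) • pairProd a π =
      (2 ^ n * n !) • ∑ f ∈ univ.filter
        (fun f : Perm (Fin (2 * n)) => ∀ i, f i ≠ i ∧ f (f i) = i ∧ G.Adj i (f i)),
        ∏ i ∈ univ.filter (fun i => i < f i), d i (f i) := by
  set IsMatching : Perm (Fin (2 * n)) → Prop := fun f => ∀ i, f i ≠ i ∧ f (f i) = i ∧ G.Adj i (f i)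
  set weight : Perm (Fin (2 * n)) → R := fun f =>
    if IsMatching f then ∏ i ∈ univ.filter (fun i => i < f i), d i (f i) else 0
  have hterm (π : Perm (Fin (2 * n))) :
      (Perm.sign π : ℤ) • pairProd a π = weight (π * stdMatching * π⁻¹) := by
    have hf (x : Fin (2 * n)) : (π * stdMatching * π⁻¹ : Perm _) (π x) = π (stdMatching x) := by
      simp
    simp only [weight, IsMatching, isPerfectMatching_iff_adj_pairs hf]
    split_ifs with hπ
    · rw [sign_smul_pairProd_eq_pairProd_of_adj hdir hd ha hpos hπ,
        prod_filter_lt_eq_pairProd hd hf]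
    · rw [pairProd_eq_zero_of_not_adj ha hπ, smul_zero]
  have hfiber (f : Perm (Fin (2 * n))) :
      ∑ π with π * stdMatching * π⁻¹ = f, weight (π * stdMatching * π⁻¹) =
        (2 ^ n * n !) • weight f := by
    rw [sum_congr rfl fun π hπ => by rw [(mem_filter.mp hπ).2], sum_const]
    by_cases hf : IsMatching f
    · rw [card_conj_stdMatching (fun i => (hf i).1) (fun i => (hf i).2.1)]
    · simp [weight, hf]
  rw [sum_congr rfl fun π _ => hterm π, ← sum_fiberwise _ (fun π => π * stdMatching * π⁻¹),
    sum_congr rfl fun f _ => hfiber f, ← smul_sum, sum_filter]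

end Kasteleyn

theorem kasteleyn_positivity_form_general {R : Type*} [CommRing R] [Algebra ℚ R]
    (n : ℕ)
    (G : SimpleGraph (Fin (2 * n))) [DecidableRel G.Adj]
    (dir : Fin (2 * n) → Fin (2 * n) → Bool)
    (hdir : ∀ i j, G.Adj i j → dir i j = !dir j i)
    (d : Fin (2 * n) → Fin (2 * n) → R)
    (hd : ∀ i j, d i j = d j i)
    (a : Matrix (Fin (2 * n)) (Fin (2 * n)) R)
    (ha : ∀ i j, a i j =
      if G.Adj i j then (if dir i j then d i j else -(d i j)) else 0)
    (hpos : ∀ π : Equiv.Perm (Fin (2 * n)),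
      (∀ k : Fin n, G.Adj (π (lo k)) (π (hi k)) ∧ dir (π (lo k)) (π (hi k)) = true) →
      Equiv.Perm.sign π = 1) :
    pf a = ∑ f ∈ Finset.univ.filter
        (fun f : Equiv.Perm (Fin (2 * n)) => ∀ i, f i ≠ i ∧ f (f i) = i ∧ G.Adj i (f i)),
      ∏ i ∈ Finset.univ.filter (fun i => i < f i), d i (f i) := by
  have hcancel : algebraMap ℚ R (1 / (2 ^ n * n !)) * ((2 ^ n * n ! : ℕ) : R) = 1 := by
    rw [← map_natCast (algebraMap ℚ R), ← map_mul, one_div, Nat.cast_mul, Nat.cast_pow,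
      Nat.cast_ofNat, inv_mul_cancel₀ (by positivity), map_one]
  rw [pf_eq_sum_pairProd, sum_sign_smul_pairProd_eq hdir hd ha hpos, nsmul_eq_mul, ← mul_assoc,
    hcancel, one_mul]

/-- **Kasteleyn's theorem in positivity form.**  Let `G` be a finite simple
graph on `{1,…,2n}`, with each edge `{i,j}` directed (exactly one of `i ≻ j`, `j ≻ i`, encoded
by the Boolean `dir`) and carrying a weight `d_{i,j} = d_{j,i}` in a commutative `ℚ`-algebra.
Let `a` be the signed adjacency matrix: `a_{i,j} = ±d_{i,j}` according to the direction for
edges, `0` otherwise.  A perfect matching, written as pairs `(v₁,v₂),…,(v_{2n-1},v_{2n})`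
with `v_{2k-1} ≻ v_{2k}` (i.e. an enumerating permutation `π` with
`G.Adj (π(2k-1)) (π(2k))` and `π(2k-1) ≻ π(2k)`), is positive if the permutation has
signature `+1`.  If every perfect matching of `G` is positive (in every such enumeration;
vacuously if there is none), then `pf(a)` equals the pure dimer partition function of `G`:
the sum over perfect matchings (encoded as fixed-point-free graph involutions `f`) of the
product of the weights of their edges. -/
theorem kasteleyn_positivity_form {R : Type*} [CommRing R] [Algebra ℚ R]
    (n : ℕ) (hn : 0 < n)
    (G : SimpleGraph (Fin (2 * n))) [DecidableRel G.Adj]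
    (dir : Fin (2 * n) → Fin (2 * n) → Bool)
    (hdir : ∀ i j, G.Adj i j → dir i j = !dir j i)
    (d : Fin (2 * n) → Fin (2 * n) → R)
    (hd : ∀ i j, d i j = d j i)
    (a : Matrix (Fin (2 * n)) (Fin (2 * n)) R)
    (ha : ∀ i j, a i j =
      if G.Adj i j then (if dir i j then d i j else -(d i j)) else 0)
    (hpos : ∀ π : Equiv.Perm (Fin (2 * n)),
      (∀ k : Fin n, G.Adj (π (lo k)) (π (hi k)) ∧ dir (π (lo k)) (π (hi k)) = true) →
      Equiv.Perm.sign π = 1) :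
    pf a = ∑ f ∈ Finset.univ.filter
        (fun f : Equiv.Perm (Fin (2 * n)) => ∀ i, f i ≠ i ∧ f (f i) = i ∧ G.Adj i (f i)),
      ∏ i ∈ Finset.univ.filter (fun i => i < f i), d i (f i) :=
  kasteleyn_positivity_form_general n G dir hdir d hd a ha hpos
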